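/- Let n ≥ 2 be an integer and let g be a nonzero polynomial with rational coefficients in n·3 variables, written in n blocks of 3 variables, which is homogeneous in each block of 3 variables. Then there exist γ ∈ [0,1) and C > 0 such that for all B ≥ 2, the number of n-tuples (x⁽¹⁾, …, x⁽ⁿ⁾) of primitive vectors in ℤ³ satisfying ∏_{j=1}^n ‖x⁽ʲ⁾‖∞³ ≤ B and g(x⁽¹⁾, …, x⁽ⁿ⁾) = 0 is at most C·B·(log B)^{n−2+γ}. -/

import Mathlib

noncomputable section
open MvPolynomial

/-- A vector of integers is primitive if the gcd of its coordinates is `1`. -/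
def IsPrimitiveVec {k : ℕ} (x : Fin k → ℤ) : Prop := Finset.gcd Finset.univ x = 1

/-- The sup-norm `max_i |x_i|` of an integer vector. -/
def supNorm {k : ℕ} (x : Fin k → ℤ) : ℕ := Finset.univ.sup fun i => (x i).natAbs

/-!
Write `‖·‖` for the sup-norm and `P(y) = ∏ⱼ ‖yⱼ‖` for a tuple of nonzero vectors; the height
condition is `P ≤ R := ⌊B^{1/3}⌋`. Peel off the first block `x` of a tuple `(x, y)`. Viewing `g` as
a polynomial in `x` with coefficients polynomial in `y` and fixing a nonzero coefficient `c`, either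
`c(y) ≠ 0`, and then `x` lies on a surface of bounded degree, which by Schwartz–Zippel has
`O(m²)` integer points of norm `≤ m`; or `y` is a zero of `c`, which has one block fewer.
Counting points of norm `≤ m` gives `∑ ‖x‖⁻³ = O(log R)` over all of `ℤ³`, but `O(1)` over a
surface. By induction on the number of blocks, `∑ P(z)⁻³ = O((log R)^{n-1})` over the zeros of a
nonzero polynomial in `n` blocks; one more peeling, with `R/P(y)` as the bound on `‖x‖`, turns
this into the count `O(R³ (log R)^{n-2})`.
-/

open Finset Real

section Boxes

variable {k : ℕ}

lemma supNorm_le_iff {x : Fin k → ℤ} {m : ℕ} : supNorm x ≤ m ↔ ∀ i, (x i).natAbs ≤ m :=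
  Finset.sup_le_iff.trans (by simp)

lemma supNorm_eq_zero {x : Fin k → ℤ} : supNorm x = 0 ↔ x = 0 := by
  rw [← Nat.le_zero, supNorm_le_iff, funext_iff]
  simp

lemma IsPrimitiveVec.ne_zero {x : Fin k → ℤ} (hx : IsPrimitiveVec x) : x ≠ 0 := by
  rintro rfl
  have : univ.gcd (0 : Fin k → ℤ) = 0 := gcd_eq_zero_iff.2 fun _ _ => rfl
  simp [IsPrimitiveVec, this] at hx

def intBox (k m : ℕ) : Finset (Fin k → ℤ) :=
  Fintype.piFinset fun _ => Icc (-(m : ℤ)) m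

lemma mem_intBox {m : ℕ} {x : Fin k → ℤ} : x ∈ intBox k m ↔ supNorm x ≤ m := by
  simp only [intBox, Fintype.mem_piFinset, mem_Icc, supNorm_le_iff]
  exact forall_congr' fun i => by omega

lemma card_intBox (k m : ℕ) : #(intBox k m) = (2 * m + 1) ^ k := by
  simp only [intBox, Fintype.card_piFinset, Int.card_Icc, prod_const, card_univ, Fintype.card_fin]
  congr 1
  omega

lemma intBox_mono {m M : ℕ} (h : m ≤ M) : intBox k m ⊆ intBox k M := fun _ hx =>
  mem_intBox.2 ((mem_intBox.1 hx).trans h)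

lemma supNorm_pos_le_of_mem_erase {M : ℕ} {x : Fin k → ℤ} (hx : x ∈ (intBox k M).erase 0) :
    0 < supNorm x ∧ supNorm x ≤ M := by
  obtain ⟨hx0, hx⟩ := mem_erase.1 hx
  exact ⟨Nat.pos_of_ne_zero (mt supNorm_eq_zero.1 hx0), mem_intBox.1 hx⟩

lemma card_filter_intBox_eval_eq_zero_le {p : MvPolynomial (Fin (k + 1)) ℚ} (hp : p ≠ 0)
    (m : ℕ) :
    #{x ∈ intBox (k + 1) m | eval (fun i => (x i : ℚ)) p = 0}
      ≤ p.totalDegree * (2 * m + 1) ^ k := by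
  set S : Finset ℚ := (Icc (-(m : ℤ)) m).image Int.cast
  have hS : #S = 2 * m + 1 := by
    rw [card_image_of_injective _ Int.cast_injective, Int.card_Icc]
    omega
  have hSZ := schwartz_zippel_totalDegree hp S
  rw [hS, div_le_div_iff₀ (by positivity) (by positivity)] at hSZ
  have hcast : #{x ∈ intBox (k + 1) m | eval (fun i => (x i : ℚ)) p = 0}
      ≤ #{f ∈ Fintype.piFinset fun _ => S | eval f p = 0} := by
    refine card_le_card_of_injOn (fun x i => (x i : ℚ)) (fun x hx => ?_) fun x _ y _ hxy => ?_
    · simp only [coe_filter, intBox, Fintype.mem_piFinset] at hx ⊢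
      exact ⟨fun i => mem_image_of_mem _ (hx.1 i), hx.2⟩
    · funext i
      simpa using congrFun hxy i
  have : (#{x ∈ intBox (k + 1) m | eval (fun i => (x i : ℚ)) p = 0} : ℚ≥0) * (2 * m + 1)
      ≤ p.totalDegree * (2 * m + 1) ^ k * (2 * m + 1) := by
    calc _ ≤ (#{f ∈ Fintype.piFinset fun _ => S | eval f p = 0} : ℚ≥0) * (2 * m + 1) := by
          gcongr
      _ ≤ _ := by simpa [pow_succ, mul_assoc] using hSZ
  exact_mod_cast le_of_mul_le_mul_right this (by positivity)

lemma card_le_of_forall_supNorm_le {m : ℕ} {A : Finset (Fin k → ℤ)}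
    (hA : ∀ x ∈ A, supNorm x ≤ m) (hm : 0 < m) : (#A : ℝ) ≤ 3 ^ k * m ^ k := by
  have h : #A ≤ #(intBox k m) := card_le_card fun x hx => mem_intBox.2 (hA x hx)
  rw [card_intBox] at h
  have hm' : (1 : ℝ) ≤ m := by exact_mod_cast hm
  calc (#A : ℝ) ≤ ((2 * m + 1 : ℕ) : ℝ) ^ k := by exact_mod_cast h
    _ ≤ (3 * m) ^ k := by gcongr; push_cast; linarith
    _ = 3 ^ k * m ^ k := mul_pow _ _ _

lemma card_le_of_forall_supNorm_le_of_eval_eq_zero {m : ℕ} {p : MvPolynomial (Fin (k + 1)) ℚ}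
    (hp : p ≠ 0) {A : Finset (Fin (k + 1) → ℤ)}
    (hA : ∀ x ∈ A, supNorm x ≤ m ∧ eval (fun i => (x i : ℚ)) p = 0) (hm : 0 < m) :
    (#A : ℝ) ≤ p.totalDegree * 3 ^ k * m ^ k := by
  have h : #A ≤ #{x ∈ intBox (k + 1) m | eval (fun i => (x i : ℚ)) p = 0} :=
    card_le_card fun x hx => mem_filter.2 ⟨mem_intBox.2 (hA x hx).1, (hA x hx).2⟩
  have hm' : (1 : ℝ) ≤ m := by exact_mod_cast hm
  calc (#A : ℝ) ≤ p.totalDegree * ((2 * m + 1 : ℕ) : ℝ) ^ k := by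
        exact_mod_cast h.trans (card_filter_intBox_eval_eq_zero_le hp m)
    _ ≤ p.totalDegree * (3 * m) ^ k := by gcongr; push_cast; linarith
    _ = p.totalDegree * 3 ^ k * m ^ k := by rw [mul_pow, mul_assoc]

end Boxes

lemma sum_inv_pow_le_of_card_le {α : Type*} (A : Finset α) (h : α → ℕ) (M s e : ℕ) (c : ℝ)
    (hA : ∀ x ∈ A, 0 < h x ∧ h x ≤ M)
    (hcard : ∀ m, 0 < m → (#{x ∈ A | h x ≤ m} : ℝ) ≤ c * m ^ e) :
    ∑ x ∈ A, ((h x : ℝ) ^ s)⁻¹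
      ≤ 2 ^ (s + 1) * c * ∑ m ∈ Icc 1 (2 * M), (m : ℝ) ^ e / m ^ (s + 1) := by
  -- Each of the `h x` terms `(m ^ (s + 1))⁻¹` with `h x ≤ m < 2 h x` is at least
  -- `((2 h x) ^ (s + 1))⁻¹`; together they give `(h x ^ s)⁻¹ / 2 ^ (s + 1)`.
  have hpoint : ∀ x ∈ A, ((h x : ℝ) ^ s)⁻¹
      ≤ 2 ^ (s + 1) * ∑ m ∈ Icc 1 (2 * M), if h x ≤ m then ((m : ℝ) ^ (s + 1))⁻¹ else 0 := by
    intro x hx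
    obtain ⟨hpos, hle⟩ := hA x hx
    have hcard : #(Ico (h x) (2 * h x)) = h x := by rw [Nat.card_Ico]; omega
    calc ((h x : ℝ) ^ s)⁻¹
        = 2 ^ (s + 1) * (#(Ico (h x) (2 * h x)) • ((2 * h x : ℝ) ^ (s + 1))⁻¹) := by
          rw [hcard, nsmul_eq_mul, mul_pow, pow_succ (h x : ℝ)]
          field_simp
      _ ≤ 2 ^ (s + 1) * ∑ m ∈ Ico (h x) (2 * h x),
            if h x ≤ m then ((m : ℝ) ^ (s + 1))⁻¹ else 0 := by
          gcongr
          refine card_nsmul_le_sum _ _ _ fun m hm => ?_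
          rw [mem_Ico] at hm
          rw [if_pos hm.1]
          have : 0 < m := hpos.trans_le hm.1
          gcongr
          exact_mod_cast hm.2.le
      _ ≤ _ := by
          gcongr
          intro m hm
          simp only [mem_Ico, mem_Icc] at hm ⊢
          omega
  calc ∑ x ∈ A, ((h x : ℝ) ^ s)⁻¹
      ≤ ∑ x ∈ A, 2 ^ (s + 1) * ∑ m ∈ Icc 1 (2 * M),
          if h x ≤ m then ((m : ℝ) ^ (s + 1))⁻¹ else 0 := sum_le_sum hpoint
    _ = 2 ^ (s + 1) * ∑ m ∈ Icc 1 (2 * M), ((m : ℝ) ^ (s + 1))⁻¹ * #{x ∈ A | h x ≤ m} := by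
        rw [← mul_sum, sum_comm]
        simp only [← sum_filter, sum_const, nsmul_eq_mul, mul_comm]
    _ ≤ 2 ^ (s + 1) * ∑ m ∈ Icc 1 (2 * M), ((m : ℝ) ^ (s + 1))⁻¹ * (c * m ^ e) := by
        gcongr with m hm
        exact hcard m (mem_Icc.1 hm).1
    _ = _ := by
        simp only [mul_sum]
        exact sum_congr rfl fun m _ => by ring

lemma sum_inv_sq_supNorm_le (M : ℕ) :
    ∑ x ∈ (intBox 3 M).erase 0, ((supNorm x : ℝ) ^ 2)⁻¹ ≤ 432 * M := by
  refine (sum_inv_pow_le_of_card_le ((intBox 3 M).erase 0) supNorm M 2 3 (3 ^ 3)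
    (fun _ => supNorm_pos_le_of_mem_erase)
    fun m hm => card_le_of_forall_supNorm_le (fun x hx => (mem_filter.1 hx).2) hm).trans_eq ?_
  rw [sum_congr rfl fun m hm => div_self (by have := (mem_Icc.1 hm).1; positivity)]
  simp only [sum_const, Nat.card_Icc, add_tsub_cancel_right, nsmul_eq_mul, Nat.cast_mul,
    Nat.cast_ofNat, mul_one]
  ring

lemma sum_inv_cube_supNorm_le (M : ℕ) :
    ∑ x ∈ (intBox 3 M).erase 0, ((supNorm x : ℝ) ^ 3)⁻¹ ≤ 864 * (1 + log M) := by
  have hsum := sum_inv_pow_le_of_card_le ((intBox 3 M).erase 0) supNorm M 3 3 (3 ^ 3)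
    (fun _ => supNorm_pos_le_of_mem_erase)
    fun m hm => card_le_of_forall_supNorm_le (fun x hx => (mem_filter.1 hx).2) hm
  have hharm : ∑ m ∈ Icc 1 (2 * M), (m : ℝ) ^ 3 / m ^ (3 + 1) ≤ 1 + log (2 * M : ℕ) := by
    refine le_of_eq_of_le ?_ (harmonic_le_one_add_log (2 * M))
    rw [harmonic_eq_sum_Icc]
    push_cast
    refine sum_congr rfl fun m hm => ?_
    have : (m : ℝ) ≠ 0 := by have := (mem_Icc.1 hm).1; positivity
    field_simp
  have hlog : log (2 * M : ℕ) ≤ 1 + log M := by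
    rcases M.eq_zero_or_pos with rfl | hM
    · simp
    rw [Nat.cast_mul, Nat.cast_ofNat, log_mul two_ne_zero (by positivity)]
    linarith [log_two_lt_d9]
  have hlogM : 0 ≤ log M := log_natCast_nonneg M
  nlinarith

lemma sum_inv_cube_supNorm_le_of_le (R M : ℕ) (hM : M ≤ R) :
    ∑ x ∈ (intBox 3 M).erase 0, ((supNorm x : ℝ) ^ 3)⁻¹ ≤ 864 * (1 + log R) :=
  (sum_le_sum_of_subset_of_nonneg (erase_subset_erase 0 (intBox_mono hM))
    fun _ _ _ => by positivity).trans (sum_inv_cube_supNorm_le R)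

lemma sum_inv_cube_supNorm_of_eval_eq_zero_le {p : MvPolynomial (Fin 3) ℚ} (hp : p ≠ 0)
    (M : ℕ) :
    ∑ x ∈ (intBox 3 M).erase 0 with eval (fun i => (x i : ℚ)) p = 0, ((supNorm x : ℝ) ^ 3)⁻¹
      ≤ 288 * p.totalDegree := by
  have hsum := sum_inv_pow_le_of_card_le
    {x ∈ (intBox 3 M).erase 0 | eval (fun i => (x i : ℚ)) p = 0} supNorm M 3 2
    (p.totalDegree * 3 ^ 2) (fun x hx => supNorm_pos_le_of_mem_erase (mem_filter.1 hx).1)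
    fun m hm => card_le_of_forall_supNorm_le_of_eval_eq_zero hp
      (fun x hx => ⟨(mem_filter.1 hx).2, (mem_filter.1 (mem_filter.1 hx).1).2⟩) hm
  have hbasel : ∑ m ∈ Icc 1 (2 * M), (m : ℝ) ^ 2 / m ^ (3 + 1) ≤ 2 := by
    have h := sum_Ioo_inv_sq_le (α := ℝ) 0 (2 * M + 1)
    have hIoo : Ioo 0 (2 * M + 1) = Icc 1 (2 * M) := by ext; simp only [mem_Ioo, mem_Icc]; omega
    rw [hIoo] at h
    refine le_of_eq_of_le (sum_congr rfl fun m hm => ?_) (by simpa using h)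
    have : (m : ℝ) ≠ 0 := by have := (mem_Icc.1 hm).1; positivity
    field_simp
  have hD : (0 : ℝ) ≤ p.totalDegree := Nat.cast_nonneg _
  nlinarith

namespace MvPolynomial

variable {R σ τ : Type*} [CommSemiring R]

lemma totalDegree_map_le {S : Type*} [CommSemiring S] (f : R →+* S) (p : MvPolynomial σ R) :
    (map f p).totalDegree ≤ p.totalDegree :=
  Finset.sup_mono (support_map_subset f p)

lemma eval_sumElim (a : σ → R) (b : τ → R) (p : MvPolynomial (σ ⊕ τ) R) :
    eval (Sum.elim a b) p = eval a (map (eval b) (sumAlgEquiv R σ τ p)) := by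
  have : (eval a).comp ((map (eval b)).comp (sumAlgEquiv R σ τ).toRingHom)
      = eval (Sum.elim a b) := by
    ext i
    · simp
    · cases i <;> simp
  exact (RingHom.congr_fun this p).symm

lemma eval_ne_zero_of_isEmpty [IsEmpty σ] {p : MvPolynomial σ R} (hp : p ≠ 0) (v : σ → R) :
    eval v p ≠ 0 := by
  rw [p.eq_C_of_isEmpty] at hp ⊢
  simpa using hp

lemma exists_partialEval_ne_zero (g : MvPolynomial (σ ⊕ τ) R) (hg : g ≠ 0) :
    ∃ (D : ℕ) (c : MvPolynomial τ R), c ≠ 0 ∧ ∀ b : τ → R, eval b c ≠ 0 →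
      ∃ p : MvPolynomial σ R, p ≠ 0 ∧ p.totalDegree ≤ D ∧
        ∀ a, eval (Sum.elim a b) g = eval a p := by
  set q := sumAlgEquiv R σ τ g
  obtain ⟨μ, hμ⟩ := ne_zero_iff.1 ((map_ne_zero_iff _ (sumAlgEquiv R σ τ).injective).2 hg)
  refine ⟨q.totalDegree, q.coeff μ, hμ, fun b hb => ⟨map (eval b) q, ?_, totalDegree_map_le _ q,
    fun a => eval_sumElim a b g⟩⟩
  exact ne_zero_iff.2 ⟨μ, by rwa [coeff_map]⟩

end MvPolynomial

section Tuples

variable {k n : ℕ}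

def NonzeroFibersOff (g : MvPolynomial (Fin (n + 1) × Fin k) ℚ) (c : MvPolynomial (Fin n × Fin k) ℚ)
    (D : ℕ) : Prop :=
  ∀ y : Fin n → Fin k → ℤ, eval (fun q => (y q.1 q.2 : ℚ)) c ≠ 0 →
    ∃ p : MvPolynomial (Fin k) ℚ, p ≠ 0 ∧ p.totalDegree ≤ D ∧ ∀ x : Fin k → ℤ,
      eval (fun q => ((Fin.cons x y : Fin (n + 1) → Fin k → ℤ) q.1 q.2 : ℚ)) g
        = eval (fun i => (x i : ℚ)) p

lemma exists_nonzeroFibersOff (g : MvPolynomial (Fin (n + 1) × Fin k) ℚ) (hg : g ≠ 0) :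
    ∃ (D : ℕ) (c : MvPolynomial (Fin n × Fin k) ℚ), c ≠ 0 ∧ NonzeroFibersOff g c D := by
  let e : Fin (n + 1) × Fin k ≃ Fin k ⊕ Fin n × Fin k :=
    ((_root_.finSuccEquiv n).prodCongr (Equiv.refl _)).trans optionProdEquiv
  obtain ⟨D, c, hc, hspec⟩ := exists_partialEval_ne_zero (rename e g)
    ((map_ne_zero_iff _ (rename_injective e e.injective)).2 hg)
  refine ⟨D, c, hc, fun y hy => ?_⟩
  obtain ⟨p, hp, hpD, hev⟩ := hspec _ hy
  refine ⟨p, hp, hpD, fun x => ?_⟩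
  rw [← hev, eval_rename]
  refine congrArg (eval · g) (funext fun ⟨j, i⟩ => ?_)
  cases j using Fin.cases <;> simp [e]

def tupleHeight (y : Fin n → Fin k → ℤ) : ℕ := ∏ j, supNorm (y j)

lemma tupleHeight_cons (x : Fin k → ℤ) (y : Fin n → Fin k → ℤ) :
    tupleHeight (Fin.cons x y : Fin (n + 1) → Fin k → ℤ) = supNorm x * tupleHeight y := by
  simp [tupleHeight, Fin.prod_univ_succ]

lemma tupleHeight_pos {y : Fin n → Fin k → ℤ} (hy : ∀ j, y j ≠ 0) : 0 < tupleHeight y :=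
  prod_pos fun j _ => Nat.pos_of_ne_zero (mt supNorm_eq_zero.1 (hy j))

lemma inv_pow_tupleHeight_cons (s : ℕ) (x : Fin k → ℤ) (y : Fin n → Fin k → ℤ) :
    ((tupleHeight (Fin.cons x y : Fin (n + 1) → Fin k → ℤ) : ℝ) ^ s)⁻¹
      = ((tupleHeight y : ℝ) ^ s)⁻¹ * ((supNorm x : ℝ) ^ s)⁻¹ := by
  rw [tupleHeight_cons, Nat.cast_mul, mul_pow, mul_inv, mul_comm]

def boundedTuples (k n R : ℕ) : Finset (Fin n → Fin k → ℤ) :=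
  {y ∈ Fintype.piFinset fun _ => (intBox k R).erase 0 | tupleHeight y ≤ R}

lemma mem_boundedTuples {R : ℕ} {y : Fin n → Fin k → ℤ} :
    y ∈ boundedTuples k n R ↔ (∀ j, y j ≠ 0) ∧ tupleHeight y ≤ R := by
  simp only [boundedTuples, mem_filter, Fintype.mem_piFinset, mem_erase, mem_intBox]
  refine ⟨fun h => ⟨fun j => (h.1 j).1, h.2⟩, fun h => ⟨fun j => ⟨h.1 j, ?_⟩, h.2⟩⟩
  exact (Nat.le_of_dvd (tupleHeight_pos h.1) (dvd_prod_of_mem _ (mem_univ j))).trans h.2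

lemma cons_mem_boundedTuples {R : ℕ} {x : Fin k → ℤ} {y : Fin n → Fin k → ℤ} :
    (Fin.cons x y : Fin (n + 1) → Fin k → ℤ) ∈ boundedTuples k (n + 1) R
      ↔ y ∈ boundedTuples k n R ∧ x ∈ (intBox k (R / tupleHeight y)).erase 0 := by
  simp only [mem_boundedTuples, Fin.forall_fin_succ, Fin.cons_zero, Fin.cons_succ,
    tupleHeight_cons, mem_erase, mem_intBox]
  constructor
  · rintro ⟨⟨hx, hy⟩, hR⟩
    have hxpos : 0 < supNorm x := Nat.pos_of_ne_zero (mt supNorm_eq_zero.1 hx)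
    exact ⟨⟨hy, le_of_mul_le_of_one_le_right hR hxpos⟩, hx,
      (Nat.le_div_iff_mul_le (tupleHeight_pos hy)).2 hR⟩
  · rintro ⟨⟨hy, -⟩, hx, hxR⟩
    exact ⟨⟨hx, hy⟩, (Nat.le_div_iff_mul_le (tupleHeight_pos hy)).1 hxR⟩

lemma sum_boundedTuples_succ {M : Type*} [AddCommMonoid M] (R : ℕ)
    (f : (Fin (n + 1) → Fin k → ℤ) → M) :
    ∑ z ∈ boundedTuples k (n + 1) R, f z
      = ∑ y ∈ boundedTuples k n R, ∑ x ∈ (intBox k (R / tupleHeight y)).erase 0,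
          f (Fin.cons x y) := by
  rw [sum_sigma']
  refine sum_nbij' (fun z => ⟨Fin.tail z, z 0⟩) (fun p => Fin.cons p.2 p.1) ?_ ?_ ?_ ?_ ?_
  · intro z hz
    rw [← Fin.cons_self_tail z, cons_mem_boundedTuples] at hz
    exact mem_sigma.2 hz
  · rintro ⟨y, x⟩ h
    exact cons_mem_boundedTuples.2 (mem_sigma.1 h)
  · intro z _
    exact Fin.cons_self_tail z
  · rintro ⟨y, x⟩ _
    simp
  · intro z _
    simp

def zeroTuples (g : MvPolynomial (Fin n × Fin k) ℚ) (R : ℕ) : Finset (Fin n → Fin k → ℤ) :=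
  {z ∈ boundedTuples k n R | eval (fun q => (z q.1 q.2 : ℚ)) g = 0}

def zeroFiber (g : MvPolynomial (Fin (n + 1) × Fin k) ℚ) (R : ℕ) (y : Fin n → Fin k → ℤ) :
    Finset (Fin k → ℤ) :=
  {x ∈ (intBox k (R / tupleHeight y)).erase 0 |
    eval (fun q => ((Fin.cons x y : Fin (n + 1) → Fin k → ℤ) q.1 q.2 : ℚ)) g = 0}

lemma supNorm_le_of_mem_zeroFiber {g : MvPolynomial (Fin (n + 1) × Fin k) ℚ} {R : ℕ}
    {y : Fin n → Fin k → ℤ} {x : Fin k → ℤ} (hx : x ∈ zeroFiber g R y) :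
    supNorm x ≤ R / tupleHeight y :=
  (supNorm_pos_le_of_mem_erase (mem_filter.1 hx).1).2

lemma sum_zeroTuples_succ {M : Type*} [AddCommMonoid M]
    (g : MvPolynomial (Fin (n + 1) × Fin k) ℚ) (R : ℕ) (f : (Fin (n + 1) → Fin k → ℤ) → M) :
    ∑ z ∈ zeroTuples g R, f z
      = ∑ y ∈ boundedTuples k n R, ∑ x ∈ zeroFiber g R y, f (Fin.cons x y) := by
  rw [zeroTuples, sum_filter, sum_boundedTuples_succ]
  simp only [zeroFiber, sum_filter]

end Tuples

lemma sum_boundedTuples_inv_cube_le (n R : ℕ) :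
    ∑ z ∈ boundedTuples 3 n R, ((tupleHeight z : ℝ) ^ 3)⁻¹ ≤ (864 * (1 + log R)) ^ n := by
  induction n with
  | zero =>
    simpa [tupleHeight] using card_le_one_of_subsingleton (boundedTuples 3 0 R)
  | succ n ih =>
    rw [sum_boundedTuples_succ]
    simp only [inv_pow_tupleHeight_cons, ← mul_sum]
    calc _ ≤ ∑ y ∈ boundedTuples 3 n R,
            ((tupleHeight y : ℝ) ^ 3)⁻¹ * (864 * (1 + log R)) := by
          gcongr with y
          exact sum_inv_cube_supNorm_le_of_le R _ (Nat.div_le_self R _)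
      _ ≤ (864 * (1 + log R)) ^ n * (864 * (1 + log R)) := by
          rw [← sum_mul]
          have : 0 ≤ 1 + log R := by linarith [log_natCast_nonneg R]
          gcongr
      _ = _ := (pow_succ _ _).symm

lemma sum_boundedTuples_inv_sq_le (n R : ℕ) :
    ∑ z ∈ boundedTuples 3 (n + 1) R, ((tupleHeight z : ℝ) ^ 2)⁻¹
      ≤ 432 * R * (864 * (1 + log R)) ^ n := by
  rw [sum_boundedTuples_succ]
  simp only [inv_pow_tupleHeight_cons, ← mul_sum]
  calc _ ≤ ∑ y ∈ boundedTuples 3 n R,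
          ((tupleHeight y : ℝ) ^ 2)⁻¹ * (432 * (R / tupleHeight y)) := by
        gcongr with y
        exact (sum_inv_sq_supNorm_le _).trans (by gcongr; exact Nat.cast_div_le)
    _ = 432 * R * ∑ y ∈ boundedTuples 3 n R, ((tupleHeight y : ℝ) ^ 3)⁻¹ := by
        rw [mul_sum]
        refine sum_congr rfl fun y _ => ?_
        field_simp
    _ ≤ _ := by gcongr; exact sum_boundedTuples_inv_cube_le n R

section Fibers

variable {n D R : ℕ} {g : MvPolynomial (Fin (n + 1) × Fin 3) ℚ} {c : MvPolynomial (Fin n × Fin 3) ℚ}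

lemma sum_zeroFiber_inv_cube_le (hgc : NonzeroFibersOff g c D) (y : Fin n → Fin 3 → ℤ) :
    ∑ x ∈ zeroFiber g R y, ((supNorm x : ℝ) ^ 3)⁻¹
      ≤ 288 * D + if eval (fun q => (y q.1 q.2 : ℚ)) c = 0 then 864 * (1 + log R) else 0 := by
  split_ifs with hy
  · have := sum_inv_cube_supNorm_le_of_le R _ (Nat.div_le_self R (tupleHeight y))
    have : ∑ x ∈ zeroFiber g R y, ((supNorm x : ℝ) ^ 3)⁻¹
        ≤ ∑ x ∈ (intBox 3 (R / tupleHeight y)).erase 0, ((supNorm x : ℝ) ^ 3)⁻¹ :=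
      sum_le_sum_of_subset_of_nonneg (filter_subset _ _) fun _ _ _ => by positivity
    linarith [(by positivity : (0 : ℝ) ≤ 288 * D)]
  · obtain ⟨p, hp, hpD, hev⟩ := hgc y hy
    simp only [zeroFiber, hev, add_zero]
    refine (sum_inv_cube_supNorm_of_eval_eq_zero_le hp _).trans ?_
    gcongr

lemma card_zeroFiber_le (hgc : NonzeroFibersOff g c D) {y : Fin n → Fin 3 → ℤ}
    (hy : y ∈ boundedTuples 3 n R) :
    (#(zeroFiber g R y) : ℝ)
      ≤ 9 * D * R ^ 2 * ((tupleHeight y : ℝ) ^ 2)⁻¹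
        + if eval (fun q => (y q.1 q.2 : ℚ)) c = 0
          then 27 * R ^ 3 * ((tupleHeight y : ℝ) ^ 3)⁻¹ else 0 := by
  obtain ⟨hy0, hyR⟩ := mem_boundedTuples.1 hy
  have hm : 0 < R / tupleHeight y := Nat.div_pos hyR (tupleHeight_pos hy0)
  have hmR : ((R / tupleHeight y : ℕ) : ℝ) ≤ R / tupleHeight y := Nat.cast_div_le
  split_ifs with hc0
  · refine (card_le_of_forall_supNorm_le (fun _ => supNorm_le_of_mem_zeroFiber) hm).trans ?_
    calc (3 : ℝ) ^ 3 * ((R / tupleHeight y : ℕ) : ℝ) ^ 3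
        ≤ 3 ^ 3 * (R / tupleHeight y) ^ 3 := by gcongr
      _ = 27 * R ^ 3 * ((tupleHeight y : ℝ) ^ 3)⁻¹ := by ring
      _ ≤ _ := le_add_of_nonneg_left (by positivity)
  · obtain ⟨p, hp, hpD, hev⟩ := hgc y hc0
    have hA : ∀ x ∈ zeroFiber g R y,
        supNorm x ≤ R / tupleHeight y ∧ eval (fun i => (x i : ℚ)) p = 0 :=
      fun x hx => ⟨supNorm_le_of_mem_zeroFiber hx, (hev x).symm.trans (mem_filter.1 hx).2⟩
    refine (card_le_of_forall_supNorm_le_of_eval_eq_zero hp hA hm).trans ?_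
    rw [add_zero]
    calc p.totalDegree * (3 : ℝ) ^ 2 * ((R / tupleHeight y : ℕ) : ℝ) ^ 2
        ≤ D * 3 ^ 2 * (R / tupleHeight y) ^ 2 := by gcongr
      _ = 9 * D * R ^ 2 * ((tupleHeight y : ℝ) ^ 2)⁻¹ := by ring

end Fibers

/-- The bound `∑ P(z)⁻³ ≤ C (1 + log R) ^ (n - 1)`, multiplied through by `1 + log R` so that it
also covers `n = 0`. -/
lemma exists_sum_zeroTuples_inv_cube_le (n : ℕ) (g : MvPolynomial (Fin n × Fin 3) ℚ)
    (hg : g ≠ 0) :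
    ∃ C : ℝ, ∀ R : ℕ, (1 + log R) * ∑ z ∈ zeroTuples g R, ((tupleHeight z : ℝ) ^ 3)⁻¹
      ≤ C * (1 + log R) ^ n := by
  induction n with
  | zero =>
    refine ⟨0, fun R => ?_⟩
    rw [zeroTuples, filter_false_of_mem fun z _ => eval_ne_zero_of_isEmpty hg _]
    simp
  | succ n ih =>
    obtain ⟨D, c, hc, hgc⟩ := exists_nonzeroFibersOff g hg
    obtain ⟨C, hC⟩ := ih c hc
    refine ⟨288 * D * 864 ^ n + 864 * C, fun R => ?_⟩
    have hL : 0 ≤ 1 + log R := by linarith [log_natCast_nonneg R]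
    have hfiber := fun y => sum_zeroFiber_inv_cube_le (R := R) hgc y
    generalize hLdef : 1 + log R = L at hL hfiber ⊢
    calc L * ∑ z ∈ zeroTuples g R, ((tupleHeight z : ℝ) ^ 3)⁻¹
        ≤ L * ∑ y ∈ boundedTuples 3 n R, ((tupleHeight y : ℝ) ^ 3)⁻¹ *
            (288 * D + if eval (fun q => (y q.1 q.2 : ℚ)) c = 0 then 864 * L else 0) := by
          rw [sum_zeroTuples_succ]
          simp only [inv_pow_tupleHeight_cons, ← mul_sum]
          gcongr with y
          exact hfiber y
      _ = ∑ y ∈ boundedTuples 3 n R, (288 * D * L * ((tupleHeight y : ℝ) ^ 3)⁻¹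
          + if eval (fun q => (y q.1 q.2 : ℚ)) c = 0
            then 864 * L * (L * ((tupleHeight y : ℝ) ^ 3)⁻¹) else 0) := by
          rw [mul_sum]
          exact sum_congr rfl fun y _ => by split_ifs <;> ring
      _ = 288 * D * L * ∑ y ∈ boundedTuples 3 n R, ((tupleHeight y : ℝ) ^ 3)⁻¹
          + 864 * L * (L * ∑ y ∈ zeroTuples c R, ((tupleHeight y : ℝ) ^ 3)⁻¹) := by
          rw [sum_add_distrib, ← sum_filter, ← mul_sum, ← mul_sum, ← mul_sum]
          rfl
      _ ≤ 288 * D * L * (864 * L) ^ n + 864 * L * (C * L ^ n) := by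
          gcongr 288 * D * L * ?_ + 864 * L * ?_
          · exact hLdef ▸ sum_boundedTuples_inv_cube_le n R
          · exact hLdef ▸ hC R
      _ = (288 * D * 864 ^ n + 864 * C) * L ^ (n + 1) := by ring

lemma exists_card_zeroTuples_le (n : ℕ) (g : MvPolynomial (Fin (n + 2) × Fin 3) ℚ)
    (hg : g ≠ 0) :
    ∃ C : ℝ, ∀ R : ℕ, (#(zeroTuples g R) : ℝ) ≤ C * R ^ 3 * (1 + log R) ^ n := by
  obtain ⟨D, c, hc, hgc⟩ := exists_nonzeroFibersOff g hg
  obtain ⟨C, hC⟩ := exists_sum_zeroTuples_inv_cube_le (n + 1) c hc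
  refine ⟨3888 * D * 864 ^ n + 27 * C, fun R => ?_⟩
  have hW : ∑ y ∈ zeroTuples c R, ((tupleHeight y : ℝ) ^ 3)⁻¹ ≤ C * (1 + log R) ^ n := by
    have := hC R
    rw [pow_succ', mul_left_comm] at this
    exact le_of_mul_le_mul_left this (by linarith [log_natCast_nonneg R])
  generalize hLdef : 1 + log R = L at hW ⊢
  calc (#(zeroTuples g R) : ℝ)
      = ∑ y ∈ boundedTuples 3 (n + 1) R, (#(zeroFiber g R y) : ℝ) := by
        simpa using sum_zeroTuples_succ g R fun _ => (1 : ℝ)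
    _ ≤ ∑ y ∈ boundedTuples 3 (n + 1) R, (9 * D * R ^ 2 * ((tupleHeight y : ℝ) ^ 2)⁻¹
          + if eval (fun q => (y q.1 q.2 : ℚ)) c = 0
            then 27 * R ^ 3 * ((tupleHeight y : ℝ) ^ 3)⁻¹ else 0) :=
        sum_le_sum fun y hy => card_zeroFiber_le hgc hy
    _ = 9 * D * R ^ 2 * ∑ y ∈ boundedTuples 3 (n + 1) R, ((tupleHeight y : ℝ) ^ 2)⁻¹
          + 27 * R ^ 3 * ∑ y ∈ zeroTuples c R, ((tupleHeight y : ℝ) ^ 3)⁻¹ := by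
        rw [sum_add_distrib, ← sum_filter, ← mul_sum, ← mul_sum]
        rfl
    _ ≤ 9 * D * R ^ 2 * (432 * R * (864 * L) ^ n) + 27 * R ^ 3 * (C * L ^ n) := by
        gcongr
        exact hLdef ▸ sum_boundedTuples_inv_sq_le n R
    _ = _ := by ring

lemma le_floor_rpow_inv_iff {B : ℝ} (hB : 0 ≤ B) {e : ℕ} (he : e ≠ 0) (P : ℕ) :
    P ≤ ⌊B ^ (e : ℝ)⁻¹⌋₊ ↔ (P : ℝ) ^ e ≤ B := by
  rw [Nat.le_floor_iff (by positivity), le_rpow_inv_iff_of_pos (Nat.cast_nonneg P) hB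
    (by positivity), rpow_natCast]

lemma natCard_primitive_zeros_le {n : ℕ} (g : MvPolynomial (Fin n × Fin 3) ℚ) {B : ℝ}
    (hB : 0 ≤ B) :
    Nat.card {x : Fin n → Fin 3 → ℤ | (∀ j, IsPrimitiveVec (x j)) ∧
        (∏ j, ((supNorm (x j) : ℝ)) ^ 3) ≤ B ∧
        eval (fun q : Fin n × Fin 3 => ((x q.1 q.2 : ℚ))) g = 0}
      ≤ #(zeroTuples g ⌊B ^ ((3 : ℕ) : ℝ)⁻¹⌋₊) := by
  refine (Nat.card_mono (finite_toSet _) ?_).trans_eq (Nat.card_eq_finsetCard _)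
  rintro x ⟨hprim, hxB, hx⟩
  refine mem_filter.2 ⟨mem_boundedTuples.2 ⟨fun j => (hprim j).ne_zero, ?_⟩, hx⟩
  rw [le_floor_rpow_inv_iff hB three_ne_zero, tupleHeight]
  push_cast
  rwa [← prod_pow]

lemma floor_rpow_inv_three_bounds {B : ℝ} (hB : 2 ≤ B) :
    ((⌊B ^ ((3 : ℕ) : ℝ)⁻¹⌋₊ : ℕ) : ℝ) ^ 3 ≤ B ∧
      1 + log (⌊B ^ ((3 : ℕ) : ℝ)⁻¹⌋₊ : ℕ) ≤ 3 * log B := by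
  have hfloor := le_floor_rpow_inv_iff (by linarith) three_ne_zero
  set R := ⌊B ^ ((3 : ℕ) : ℝ)⁻¹⌋₊
  have hR3 : (R : ℝ) ^ 3 ≤ B := (hfloor R).1 le_rfl
  have hR1 : 1 ≤ R := (hfloor 1).2 (by norm_num; linarith)
  have hRB : (R : ℝ) ≤ B := le_trans (by exact_mod_cast Nat.le_self_pow three_ne_zero R) hR3
  have := log_le_log (by exact_mod_cast hR1) hRB
  have := log_le_log two_pos hB
  exact ⟨hR3, by linarith [log_two_gt_d9]⟩

theorem stmt6_general (n : ℕ) (hn : 2 ≤ n) (g : MvPolynomial (Fin n × Fin 3) ℚ) (hg : g ≠ 0) :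
    ∃ γ : ℝ, 0 ≤ γ ∧ γ < 1 ∧ ∃ C : ℝ, 0 < C ∧ ∀ B : ℝ, 2 ≤ B →
      (Nat.card {x : Fin n → Fin 3 → ℤ |
        (∀ j, IsPrimitiveVec (x j)) ∧
        (∏ j, ((supNorm (x j) : ℝ)) ^ 3) ≤ B ∧
        MvPolynomial.eval (fun q : Fin n × Fin 3 => ((x q.1 q.2 : ℚ))) g = 0} : ℝ)
      ≤ C * B * Real.log B ^ ((n : ℝ) - 2 + γ) := by
  obtain ⟨k, rfl⟩ : ∃ k, n = k + 2 := ⟨n - 2, by omega⟩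
  obtain ⟨C, hC⟩ := exists_card_zeroTuples_le k g hg
  refine ⟨0, le_rfl, one_pos, max C 1 * 3 ^ k, by positivity, fun B hB => ?_⟩
  obtain ⟨hR3, hlogR⟩ := floor_rpow_inv_three_bounds hB
  set R := ⌊B ^ ((3 : ℕ) : ℝ)⁻¹⌋₊
  have hL : 0 ≤ 1 + log R := by linarith [log_natCast_nonneg R]
  calc _ ≤ (#(zeroTuples g R) : ℝ) := by exact_mod_cast natCard_primitive_zeros_le g (by linarith)
    _ ≤ C * R ^ 3 * (1 + log R) ^ k := hC R
    _ ≤ max C 1 * B * (3 * log B) ^ k := by gcongr; exact le_max_left _ _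
    _ = max C 1 * 3 ^ k * B * log B ^ (((k + 2 : ℕ) : ℝ) - 2 + 0) := by
        rw [show ((k + 2 : ℕ) : ℝ) - 2 + 0 = k by push_cast; ring, rpow_natCast]
        ring

/-- Let `n ≥ 2` and let `g ≠ 0` be a polynomial over `ℚ` in `n` blocks of `3` variables,
homogeneous in each block.  Then there are `γ ∈ [0,1)` and `C > 0` such that for all `B ≥ 2`,
the number of `n`-tuples of primitive vectors in `ℤ³` with `∏_j ‖x⁽ʲ⁾‖∞³ ≤ B` and
`g(x⁽¹⁾,…,x⁽ⁿ⁾) = 0` is at most `C·B·(log B)^(n−2+γ)`. -/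
theorem stmt6 (n : ℕ) (hn : 2 ≤ n) (g : MvPolynomial (Fin n × Fin 3) ℚ) (hg : g ≠ 0)
    (hhom : ∀ j : Fin n, ∃ dj : ℕ, ∀ m ∈ g.support, ∑ i : Fin 3, m (j, i) = dj) :
    ∃ γ : ℝ, 0 ≤ γ ∧ γ < 1 ∧ ∃ C : ℝ, 0 < C ∧ ∀ B : ℝ, 2 ≤ B →
      (Nat.card {x : Fin n → Fin 3 → ℤ |
        (∀ j, IsPrimitiveVec (x j)) ∧
        (∏ j, ((supNorm (x j) : ℝ)) ^ 3) ≤ B ∧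
        MvPolynomial.eval (fun q : Fin n × Fin 3 => ((x q.1 q.2 : ℚ))) g = 0} : ℝ)
      ≤ C * B * Real.log B ^ ((n : ℝ) - 2 + γ) :=
  stmt6_general n hn g hg
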